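/- Let n be a positive integer and let b, d be real numbers with b < 1 - n and d > 0. Then for every real polynomial g of degree at most n - 1, ∫_{-∞}^0 z^{d-1} (1-z)^{b-d-n} ₂F₁(-n, b; d; z) g(z) dz = 0 (the integral being absolutely convergent), where for z < 0 the factor z^{d-1} is interpreted as a fixed continuous branch, e.g. |z|^{d-1} up to a constant sign. -/

import Mathlib

open MeasureTheory

/-- The Pochhammer symbol `(x)_k = x (x+1) ⋯ (x+k-1)` for a real number `x`. -/
noncomputable def poch (x : ℝ) (k : ℕ) : ℝ := ∏ i ∈ Finset.range k, (x + i)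

/-- The terminating Gauss hypergeometric polynomial `₂F₁(-n, b; d; z)`
    as a real polynomial in `z`. -/
noncomputable def hypPoly (n : ℕ) (b d : ℝ) : Polynomial ℝ :=
  ∑ k ∈ Finset.range (n + 1),
    Polynomial.C ((poch (-(n : ℝ)) k * poch b k) / (poch d k * (Nat.factorial k))) *
      Polynomial.X ^ k

/-!
Expand `g` in powers of `1 - z` and absorb them into the weight: it suffices that
`₂F₁(-n, b; d; z)` integrates to zero against `|z| ^ (d - 1) (1 - z) ^ (b - d - n + j)` for every
`j < n`. The substitution `z = t / (t - 1)` turns each moment `∫ |z| ^ (s - 1) (1 - z) ^ e z ^ k`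
over `(-∞, 0)` into a Beta integral, equal to `(-1) ^ k Γ(s + k) Γ(-(s + k + e)) / Γ(-e)`.
Against the coefficients of `₂F₁` these moments sum to a multiple of
`Γ(d) Γ(-b - j) ∑ₖ (n choose k) (b)ₖ (-b - j)ₙ₋ₖ`, which is `Γ(d) Γ(-b - j) (-j)ₙ = 0` by
Chu–Vandermonde.
-/

section Pochhammer

open Finset

@[simp] lemma poch_zero (x : ℝ) : poch x 0 = 1 := by simp [poch]

lemma poch_succ (x : ℝ) (k : ℕ) : poch x (k + 1) = poch x k * (x + k) :=
  prod_range_succ _ k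

lemma poch_pos {x : ℝ} (hx : 0 < x) (k : ℕ) : 0 < poch x k :=
  prod_pos fun i _ => by positivity

lemma poch_neg_natCast_eq_zero {j n : ℕ} (h : j < n) : poch (-(j : ℝ)) n = 0 :=
  prod_eq_zero (mem_range.mpr h) (neg_add_cancel _)

lemma poch_neg_natCast_mul_neg_one_pow {n k : ℕ} (hk : k ≤ n) :
    poch (-(n : ℝ)) k * (-1) ^ k = k.factorial * n.choose k := by
  induction k with
  | zero => simp
  | succ k ih =>
    have hchoose : (n.choose (k + 1) : ℝ) * (k + 1) = n.choose k * (n - k) := by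
      rw [← Nat.cast_sub (by omega)]
      exact_mod_cast Nat.choose_succ_right_eq n k
    rw [poch_succ, pow_succ, Nat.factorial_succ]
    push_cast
    linear_combination (n - k : ℝ) * ih (by omega) - (k.factorial : ℝ) * hchoose

lemma poch_add_eq_sum_antidiagonal (x y : ℝ) (n : ℕ) :
    poch (x + y) n = ∑ ij ∈ antidiagonal n, n.choose ij.1 * (poch x ij.1 * poch y ij.2) := by
  induction n with
  | zero => simp
  | succ n ih =>
    rw [sum_antidiagonal_choose_succ_mul (fun i j => poch x i * poch y j), ← sum_add_distrib,
      poch_succ, ih, sum_mul]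
    refine sum_congr rfl fun ij hij => ?_
    rw [HasAntidiagonal.mem_antidiagonal] at hij
    rw [Nat.choose_symm_of_eq_add hij.symm, poch_succ, poch_succ, ← hij]
    push_cast
    ring

lemma poch_add_eq_sum_range (x y : ℝ) (n : ℕ) :
    poch (x + y) n = ∑ k ∈ range (n + 1), n.choose k * (poch x k * poch y (n - k)) := by
  rw [poch_add_eq_sum_antidiagonal, Nat.sum_antidiagonal_eq_sum_range_succ
    (fun i j => (n.choose i : ℝ) * (poch x i * poch y j))]

lemma Gamma_add_natCast_eq_mul_poch {x : ℝ} (hx : 0 < x) (k : ℕ) :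
    Real.Gamma (x + k) = Real.Gamma x * poch x k := by
  induction k with
  | zero => simp
  | succ k ih =>
    rw [Nat.cast_succ, ← add_assoc, Real.Gamma_add_one (by positivity), ih, poch_succ]
    ring

lemma sum_choose_mul_poch_mul_Gamma_add_natCast (b : ℝ) {a : ℝ} (ha : 0 < a) (n : ℕ) :
    ∑ k ∈ range (n + 1), n.choose k * poch b k * Real.Gamma (a + ↑(n - k)) =
      Real.Gamma a * poch (b + a) n := by
  simp only [Gamma_add_natCast_eq_mul_poch ha, poch_add_eq_sum_range, mul_sum]
  exact sum_congr rfl fun k _ => by ring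

lemma sum_hypPoly_coeff_mul_Gamma_eq_zero {n j : ℕ} (hj : j < n) (b : ℝ) {d : ℝ} (hd : 0 < d)
    (hbj : b + j < 0) :
    ∑ k ∈ range (n + 1), poch (-(n : ℝ)) k * poch b k / (poch d k * k.factorial) * (-1) ^ k *
      Real.Gamma (d + k) * Real.Gamma (n - b - j - k) = 0 := by
  have ha : 0 < -b - j := by linarith
  calc _ = Real.Gamma d *
        ∑ k ∈ range (n + 1), n.choose k * poch b k * Real.Gamma (-b - j + ↑(n - k)) := by
        rw [mul_sum]
        refine sum_congr rfl fun k hk => ?_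
        have hkn : k ≤ n := Nat.lt_succ_iff.mp (mem_range.mp hk)
        have hpos := poch_pos hd k
        have hchoose := poch_neg_natCast_mul_neg_one_pow hkn
        rw [Gamma_add_natCast_eq_mul_poch hd, Nat.cast_sub hkn,
          show (n : ℝ) - b - j - k = -b - j + (n - k) by ring]
        field_simp
        linear_combination poch b k * Real.Gamma (-b - j + (n - k)) * hchoose
    _ = 0 := by
        rw [sum_choose_mul_poch_mul_Gamma_add_natCast b ha,
          show b + (-b - j) = -(j : ℝ) by ring, poch_neg_natCast_eq_zero hj, mul_zero, mul_zero]

end Pochhammer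

open Set

lemma ofReal_rpow_mul_one_sub_rpow {x : ℝ} (hx : x ∈ Icc 0 1) (α β : ℝ) :
    ((x ^ (α - 1) * (1 - x) ^ (β - 1) : ℝ) : ℂ) =
      (x : ℂ) ^ ((α : ℂ) - 1) * (1 - (x : ℂ)) ^ ((β : ℂ) - 1) := by
  rw [Complex.ofReal_mul, Complex.ofReal_cpow hx.1, Complex.ofReal_cpow (sub_nonneg.mpr hx.2)]
  push_cast
  rfl

lemma integrableOn_Ioo_rpow_mul_one_sub_rpow {α β : ℝ} (hα : 0 < α) (hβ : 0 < β) :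
    IntegrableOn (fun x : ℝ => x ^ (α - 1) * (1 - x) ^ (β - 1)) (Ioo 0 1) := by
  have h := Complex.betaIntegral_convergent (u := α) (v := β) (by simpa) (by simpa)
  rw [intervalIntegrable_iff_integrableOn_Ioo_of_le zero_le_one] at h
  refine IntegrableOn.congr_fun h.re (fun x hx => ?_) measurableSet_Ioo
  simp [← ofReal_rpow_mul_one_sub_rpow (Ioo_subset_Icc_self hx)]

lemma integral_Ioo_rpow_mul_one_sub_rpow {α β : ℝ} (hα : 0 < α) (hβ : 0 < β) :
    ∫ x in Ioo 0 1, x ^ (α - 1) * (1 - x) ^ (β - 1) =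
      Real.Gamma α * Real.Gamma β / Real.Gamma (α + β) := by
  apply Complex.ofReal_injective
  rw [← integral_complex_ofReal, setIntegral_congr_fun measurableSet_Ioo
    (fun x hx => ofReal_rpow_mul_one_sub_rpow (Ioo_subset_Icc_self hx) α β),
    ← integral_Ioc_eq_integral_Ioo, ← intervalIntegral.integral_of_le zero_le_one,
    ← Complex.betaIntegral, Complex.betaIntegral_eq_Gamma_mul_div _ _ (by simpa) (by simpa)]
  push_cast [← Complex.ofReal_add, Complex.Gamma_ofReal]
  rfl

lemma hasDerivAt_div_sub_one {t : ℝ} (ht : t ≠ 1) :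
    HasDerivAt (fun t => t / (t - 1)) (-((t - 1) ^ 2)⁻¹) t := by
  have ht' : t - 1 ≠ 0 := sub_ne_zero.mpr ht
  exact ((hasDerivAt_id' t).div ((hasDerivAt_id' t).sub_const 1) ht').congr_deriv
    (by field_simp; ring)

lemma injOn_div_sub_one : InjOn (fun t : ℝ => t / (t - 1)) {1}ᶜ := by
  intro s hs t ht hst
  have hs' : s - 1 ≠ 0 := sub_ne_zero.mpr hs
  have ht' : t - 1 ≠ 0 := sub_ne_zero.mpr ht
  rw [div_eq_div_iff hs' ht'] at hst
  linarith

lemma image_div_sub_one_Ioo : (fun t : ℝ => t / (t - 1)) '' Ioo 0 1 = Iio 0 := by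
  ext z
  constructor
  · rintro ⟨t, ⟨ht0, ht1⟩, rfl⟩
    exact div_neg_of_pos_of_neg ht0 (by linarith)
  · intro (hz : z < 0)
    refine ⟨z / (z - 1), ⟨div_pos_of_neg_of_neg hz (by linarith), ?_⟩, ?_⟩
    · rw [div_lt_one_of_neg (by linarith)]; linarith
    · have : z - 1 ≠ 0 := by linarith
      field_simp
      ring

lemma integrableOn_Iio_zero_iff_comp_div_sub_one (f : ℝ → ℝ) :
    IntegrableOn f (Iio 0) ↔
      IntegrableOn (fun t => ((t - 1) ^ 2)⁻¹ * f (t / (t - 1))) (Ioo 0 1) := by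
  rw [← image_div_sub_one_Ioo,
    integrableOn_image_iff_integrableOn_abs_deriv_smul measurableSet_Ioo
      (fun t ht => (hasDerivAt_div_sub_one ht.2.ne).hasDerivWithinAt)
      (injOn_div_sub_one.mono fun t ht => ht.2.ne)]
  simp [abs_inv]

lemma integral_Iio_zero_eq_integral_comp_div_sub_one (f : ℝ → ℝ) :
    ∫ z in Iio 0, f z = ∫ t in Ioo 0 1, ((t - 1) ^ 2)⁻¹ * f (t / (t - 1)) := by
  rw [← image_div_sub_one_Ioo, integral_image_eq_integral_abs_deriv_smul measurableSet_Ioo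
    (fun t ht => (hasDerivAt_div_sub_one ht.2.ne).hasDerivWithinAt)
    (injOn_div_sub_one.mono fun t ht => ht.2.ne)]
  simp [abs_inv]

lemma inv_sq_mul_abs_rpow_mul_one_sub_rpow_div_sub_one {t : ℝ} (ht : t ∈ Ioo 0 1) (s e : ℝ) :
    ((t - 1) ^ 2)⁻¹ * (|t / (t - 1)| ^ (s - 1) * (1 - t / (t - 1)) ^ e) =
      t ^ (s - 1) * (1 - t) ^ (-(s + e) - 1) := by
  have h1t : 0 < 1 - t := sub_pos.mpr ht.2
  have habs : |t / (t - 1)| = t * (1 - t)⁻¹ := by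
    rw [abs_div, abs_of_pos ht.1, abs_sub_comm, abs_of_pos h1t, div_eq_mul_inv]
  have hsub : 1 - t / (t - 1) = (1 - t)⁻¹ := by
    have : t - 1 ≠ 0 := by linarith
    field_simp
    ring
  have hsq : ((t - 1) ^ 2)⁻¹ = (1 - t) ^ (-2 : ℝ) := by
    rw [Real.rpow_neg h1t.le, ← neg_sub, neg_sq]; norm_cast
  rw [habs, hsub, hsq, Real.mul_rpow ht.1.le (inv_nonneg.mpr h1t.le), Real.inv_rpow h1t.le,
    Real.inv_rpow h1t.le, ← Real.rpow_neg h1t.le, ← Real.rpow_neg h1t.le]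
  rw [show (1 - t) ^ (-2 : ℝ) * (t ^ (s - 1) * (1 - t) ^ (-(s - 1)) * (1 - t) ^ (-e)) =
      t ^ (s - 1) * ((1 - t) ^ (-2 : ℝ) * (1 - t) ^ (-(s - 1)) * (1 - t) ^ (-e)) by ring,
    ← Real.rpow_add h1t, ← Real.rpow_add h1t]
  ring_nf

lemma integrableOn_Iio_abs_rpow_mul_one_sub_rpow {s e : ℝ} (hs : 0 < s) (hse : s + e < 0) :
    IntegrableOn (fun z : ℝ => |z| ^ (s - 1) * (1 - z) ^ e) (Iio 0) := by
  rw [integrableOn_Iio_zero_iff_comp_div_sub_one]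
  exact (integrableOn_Ioo_rpow_mul_one_sub_rpow hs (neg_pos.mpr hse)).congr_fun
    (fun t ht => (inv_sq_mul_abs_rpow_mul_one_sub_rpow_div_sub_one ht s e).symm) measurableSet_Ioo

lemma integral_Iio_abs_rpow_mul_one_sub_rpow {s e : ℝ} (hs : 0 < s) (hse : s + e < 0) :
    ∫ z in Iio 0, |z| ^ (s - 1) * (1 - z) ^ e =
      Real.Gamma s * Real.Gamma (-(s + e)) / Real.Gamma (-e) := by
  rw [integral_Iio_zero_eq_integral_comp_div_sub_one, setIntegral_congr_fun measurableSet_Ioo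
    (fun t ht => inv_sq_mul_abs_rpow_mul_one_sub_rpow_div_sub_one ht s e),
    integral_Ioo_rpow_mul_one_sub_rpow hs (neg_pos.mpr hse), neg_add, add_neg_cancel_left]

lemma abs_rpow_mul_one_sub_rpow_mul_pow_of_neg {z : ℝ} (hz : z < 0) (s e : ℝ) (k : ℕ) :
    |z| ^ (s - 1) * (1 - z) ^ e * z ^ k = (-1) ^ k * (|z| ^ (s + k - 1) * (1 - z) ^ e) := by
  have hpow : z ^ k = (-1) ^ k * |z| ^ k := by rw [← mul_pow, neg_one_mul, abs_of_neg hz, neg_neg]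
  rw [add_sub_right_comm, Real.rpow_add_natCast (abs_pos.mpr hz.ne).ne', hpow]
  ring

lemma integrableOn_Iio_abs_rpow_mul_one_sub_rpow_mul_pow {s e : ℝ} (k : ℕ) (hs : 0 < s)
    (hske : s + k + e < 0) :
    IntegrableOn (fun z : ℝ => |z| ^ (s - 1) * (1 - z) ^ e * z ^ k) (Iio 0) :=
  IntegrableOn.congr_fun
    ((integrableOn_Iio_abs_rpow_mul_one_sub_rpow (by positivity) hske).const_mul ((-1) ^ k))
    (fun _ hz => (abs_rpow_mul_one_sub_rpow_mul_pow_of_neg hz s e k).symm) measurableSet_Iio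

lemma integral_Iio_abs_rpow_mul_one_sub_rpow_mul_pow {s e : ℝ} (k : ℕ) (hs : 0 < s)
    (hske : s + k + e < 0) :
    ∫ z in Iio 0, |z| ^ (s - 1) * (1 - z) ^ e * z ^ k =
      (-1) ^ k * (Real.Gamma (s + k) * Real.Gamma (-(s + k + e)) / Real.Gamma (-e)) := by
  rw [setIntegral_congr_fun measurableSet_Iio
    (fun _ hz => abs_rpow_mul_one_sub_rpow_mul_pow_of_neg hz s e k), integral_const_mul,
    integral_Iio_abs_rpow_mul_one_sub_rpow (by positivity) hske]

lemma abs_rpow_mul_one_sub_rpow_mul_hypPoly_eval (n : ℕ) (b d s e z : ℝ) :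
    |z| ^ (s - 1) * (1 - z) ^ e * (hypPoly n b d).eval z =
      ∑ k ∈ Finset.range (n + 1), poch (-(n : ℝ)) k * poch b k / (poch d k * k.factorial) *
        (|z| ^ (s - 1) * (1 - z) ^ e * z ^ k) := by
  simp only [hypPoly, Polynomial.eval_finsetSum, Polynomial.eval_mul, Polynomial.eval_C,
    Polynomial.eval_pow, Polynomial.eval_X, Finset.mul_sum]
  exact Finset.sum_congr rfl fun k _ => by ring

lemma integrableOn_Iio_abs_rpow_mul_one_sub_rpow_mul_hypPoly (n : ℕ) (b d : ℝ) {s e : ℝ}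
    (hs : 0 < s) (hsne : s + n + e < 0) :
    IntegrableOn (fun z : ℝ => |z| ^ (s - 1) * (1 - z) ^ e * (hypPoly n b d).eval z) (Iio 0) := by
  simp_rw [abs_rpow_mul_one_sub_rpow_mul_hypPoly_eval]
  refine integrable_finsetSum _ fun k hk => ?_
  have hkn : (k : ℝ) ≤ n := by exact_mod_cast Nat.lt_succ_iff.mp (Finset.mem_range.mp hk)
  exact (integrableOn_Iio_abs_rpow_mul_one_sub_rpow_mul_pow k hs (by linarith)).const_mul _

lemma integral_Iio_abs_rpow_mul_one_sub_rpow_mul_hypPoly (n : ℕ) (b d : ℝ) {s e : ℝ}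
    (hs : 0 < s) (hsne : s + n + e < 0) :
    ∫ z in Iio 0, |z| ^ (s - 1) * (1 - z) ^ e * (hypPoly n b d).eval z =
      ∑ k ∈ Finset.range (n + 1), poch (-(n : ℝ)) k * poch b k / (poch d k * k.factorial) *
        ((-1) ^ k * (Real.Gamma (s + k) * Real.Gamma (-(s + k + e)) / Real.Gamma (-e))) := by
  have hske : ∀ k ∈ Finset.range (n + 1), s + k + e < 0 := fun k hk => by
    have hkn : (k : ℝ) ≤ n := by exact_mod_cast Nat.lt_succ_iff.mp (Finset.mem_range.mp hk)
    linarith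
  simp_rw [abs_rpow_mul_one_sub_rpow_mul_hypPoly_eval]
  rw [integral_finsetSum _ fun k hk =>
    (integrableOn_Iio_abs_rpow_mul_one_sub_rpow_mul_pow k hs (hske k hk)).const_mul _]
  refine Finset.sum_congr rfl fun k hk => ?_
  rw [integral_const_mul, integral_Iio_abs_rpow_mul_one_sub_rpow_mul_pow k hs (hske k hk)]

lemma integral_Iio_abs_rpow_mul_one_sub_rpow_mul_hypPoly_eq_zero {n j : ℕ} (hj : j < n) (b : ℝ)
    {d : ℝ} (hd : 0 < d) (hbj : b + j < 0) :
    ∫ z in Iio 0, |z| ^ (d - 1) * (1 - z) ^ (b - d - n + j) * (hypPoly n b d).eval z = 0 := by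
  rw [integral_Iio_abs_rpow_mul_one_sub_rpow_mul_hypPoly n b d hd (by linarith),
    ← zero_div (Real.Gamma (-(b - d - n + j))),
    ← sum_hypPoly_coeff_mul_Gamma_eq_zero hj b hd hbj, Finset.sum_div]
  refine Finset.sum_congr rfl fun k _ => ?_
  ring_nf

lemma Polynomial.eval_eq_sum_range_comp_one_sub {g : Polynomial ℝ} {n : ℕ}
    (hg : g.natDegree < n) (z : ℝ) :
    g.eval z = ∑ j ∈ Finset.range n, (g.comp (1 - Polynomial.X)).coeff j * (1 - z) ^ j := by
  have hdeg : (g.comp (1 - Polynomial.X)).natDegree < n := by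
    have h1 : (1 - Polynomial.X : Polynomial ℝ).natDegree ≤ 1 := by compute_degree
    exact Polynomial.natDegree_comp_le.trans_lt ((mul_le_of_le_one_right' h1).trans_lt hg)
  rw [← Polynomial.eval_eq_sum_range' hdeg]
  simp

theorem hyp_orthogonality_Iio_zero_general (n : ℕ) (b d : ℝ)
    (hb : b < 1 - n) (hd : 0 < d) (g : Polynomial ℝ) (hg : g.natDegree < n) :
    IntegrableOn
      (fun z : ℝ => Real.rpow |z| (d - 1) * Real.rpow (1 - z) (b - d - n) *
        (hypPoly n b d).eval z * g.eval z) (Set.Iio 0) ∧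
    ∫ z in Set.Iio (0 : ℝ),
      Real.rpow |z| (d - 1) * Real.rpow (1 - z) (b - d - n) *
        (hypPoly n b d).eval z * g.eval z = 0 := by
  simp only [Real.rpow_eq_pow]
  set h := g.comp (1 - Polynomial.X)
  have hexpand : EqOn
      (fun z : ℝ => |z| ^ (d - 1) * (1 - z) ^ (b - d - n) * (hypPoly n b d).eval z * g.eval z)
      (fun z => ∑ j ∈ Finset.range n,
        h.coeff j * (|z| ^ (d - 1) * (1 - z) ^ (b - d - n + j) * (hypPoly n b d).eval z))
      (Iio 0) := by
    intro z (hz : z < 0)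
    simp only [Polynomial.eval_eq_sum_range_comp_one_sub hg, Finset.mul_sum,
      Real.rpow_add_natCast (by linarith : 1 - z ≠ 0)]
    exact Finset.sum_congr rfl fun j _ => by ring
  have hbj : ∀ j ∈ Finset.range n, b + j < 0 := fun j hj => by
    have : (j : ℝ) + 1 ≤ n := by exact_mod_cast Finset.mem_range.mp hj
    linarith
  have hterm : ∀ j ∈ Finset.range n, IntegrableOn (fun z : ℝ =>
      h.coeff j * (|z| ^ (d - 1) * (1 - z) ^ (b - d - n + j) * (hypPoly n b d).eval z)) (Iio 0) :=
    fun j hj => (integrableOn_Iio_abs_rpow_mul_one_sub_rpow_mul_hypPoly n b d hd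
      (by linarith [hbj j hj])).const_mul _
  refine ⟨IntegrableOn.congr_fun (integrable_finsetSum _ hterm) hexpand.symm
    measurableSet_Iio, ?_⟩
  rw [setIntegral_congr_fun measurableSet_Iio hexpand, integral_finsetSum _ hterm]
  refine Finset.sum_eq_zero fun j hj => ?_
  rw [integral_const_mul, integral_Iio_abs_rpow_mul_one_sub_rpow_mul_hypPoly_eq_zero
    (Finset.mem_range.mp hj) b hd (hbj j hj), mul_zero]

/-- For `b < 1 - n` and `d > 0`, the polynomial `₂F₁(-n, b; d; z)` is orthogonal on
`(-∞, 0)` with respect to the weight `z^(d-1) (1-z)^(b-d-n)` (the factor `z^(d-1)`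
interpreted via the continuous branch `|z|^(d-1)` for `z < 0`) to every real polynomial
`g` of degree at most `n - 1`, the integral being absolutely convergent. -/
theorem hyp_orthogonality_Iio_zero (n : ℕ) (hn : 0 < n) (b d : ℝ)
    (hb : b < 1 - n) (hd : 0 < d) (g : Polynomial ℝ) (hg : g.natDegree < n) :
    IntegrableOn
      (fun z : ℝ => Real.rpow |z| (d - 1) * Real.rpow (1 - z) (b - d - n) *
        (hypPoly n b d).eval z * g.eval z) (Set.Iio 0) ∧
    ∫ z in Set.Iio (0 : ℝ),
      Real.rpow |z| (d - 1) * Real.rpow (1 - z) (b - d - n) *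
        (hypPoly n b d).eval z * g.eval z = 0 :=
  hyp_orthogonality_Iio_zero_general n b d hb hd g hg
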